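/- Let G be a graph on a finite nonempty vertex set V whose connected components are C₁, …, C_k, with embeddings x : V → ℝ^d satisfying ‖x_u - x_v‖ ≤ ξ₁ along every edge, and L₁-, L₂-Lipschitz classifiers g₁, g₂ with disagreement score d(v) = ‖g₁(x_v) - g₂(x_v)‖. For each component C_i, let u*_i ∈ C_i minimize d on C_i and K_avg(C_i) = (1/|C_i|)·Σ_{v ∈ C_i} dist(v, u*_i). Then for any ξ₂ > 0, the fraction of vertices v with d(v) ≥ ξ₂ is at most (1/ξ₂)·Σ_i (|C_i|/|V|)·( d(u*_i) + K_avg(C_i)·(L₁+L₂)·ξ₁ ). -/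

import Mathlib

private lemma walk_bound' {V : Type*} (G : SimpleGraph V)
    {d m : ℕ} (x : V → EuclideanSpace ℝ (Fin d))
    (g₁ g₂ : EuclideanSpace ℝ (Fin d) → EuclideanSpace ℝ (Fin m))
    (L₁ L₂ : NNReal) (h₁ : LipschitzWith L₁ g₁) (h₂ : LipschitzWith L₂ g₂)
    (ξ₁ : ℝ) (hedge : ∀ u v : V, G.Adj u v → ‖x u - x v‖ ≤ ξ₁)
    {v u : V} (w : G.Walk v u) :
    ‖g₁ (x v) - g₂ (x v)‖ ≤ ‖g₁ (x u) - g₂ (x u)‖ + (w.length : ℝ) * ((L₁:ℝ)+(L₂:ℝ)) * ξ₁ := by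
  have step : ∀ a b : V, G.Adj a b →
      ‖g₁ (x a) - g₂ (x a)‖ ≤ ‖g₁ (x b) - g₂ (x b)‖ + ((L₁:ℝ)+(L₂:ℝ)) * ξ₁ := by
    intro a b hab
    have e1 : ‖g₁ (x a) - g₁ (x b)‖ ≤ (L₁:ℝ) * ξ₁ := by
      have := h₁.dist_le_mul (x a) (x b)
      rw [dist_eq_norm, dist_eq_norm] at this
      exact this.trans (mul_le_mul_of_nonneg_left (hedge a b hab) L₁.coe_nonneg)
    have e2 : ‖g₂ (x a) - g₂ (x b)‖ ≤ (L₂:ℝ) * ξ₁ := by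
      have := h₂.dist_le_mul (x a) (x b)
      rw [dist_eq_norm, dist_eq_norm] at this
      exact this.trans (mul_le_mul_of_nonneg_left (hedge a b hab) L₂.coe_nonneg)
    have e3 : ‖g₁ (x a) - g₂ (x a)‖ ≤
        ‖g₁ (x b) - g₂ (x b)‖ + (‖g₁ (x a) - g₁ (x b)‖ + ‖g₂ (x a) - g₂ (x b)‖) := by
      have : g₁ (x a) - g₂ (x a) =
          (g₁ (x b) - g₂ (x b)) + ((g₁ (x a) - g₁ (x b)) - (g₂ (x a) - g₂ (x b))) := by abel
      rw [this]
      exact (norm_add_le _ _).trans (by gcongr; exact norm_sub_le _ _)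
    nlinarith [e1, e2, e3]
  induction w with
  | nil => simp
  | @cons a b c hadj p ih =>
    have := step a b hadj
    have hl : ((SimpleGraph.Walk.cons hadj p).length : ℝ) = (p.length : ℝ) + 1 := by
      simp [SimpleGraph.Walk.length_cons]
    rw [hl]
    nlinarith [this, ih]

open Classical in
theorem generalization_bound_components {V : Type*} [Fintype V] [Nonempty V]
    (G : SimpleGraph V)
    {d m : ℕ} (x : V → EuclideanSpace ℝ (Fin d))
    (g₁ g₂ : EuclideanSpace ℝ (Fin d) → EuclideanSpace ℝ (Fin m))
    (L₁ L₂ : NNReal) (h₁ : LipschitzWith L₁ g₁) (h₂ : LipschitzWith L₂ g₂)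
    (ξ₁ : ℝ) (hedge : ∀ u v : V, G.Adj u v → ‖x u - x v‖ ≤ ξ₁)
    (ustar : G.ConnectedComponent → V)
    (hmem : ∀ c : G.ConnectedComponent, G.connectedComponentMk (ustar c) = c)
    (hmin : ∀ (c : G.ConnectedComponent) (v : V), G.connectedComponentMk v = c →
      ‖g₁ (x (ustar c)) - g₂ (x (ustar c))‖ ≤ ‖g₁ (x v) - g₂ (x v)‖)
    (ξ₂ : ℝ) (hξ₂ : 0 < ξ₂) :
    ((Finset.univ.filter (fun v => ξ₂ ≤ ‖g₁ (x v) - g₂ (x v)‖)).card : ℝ) /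
        (Fintype.card V : ℝ) ≤
      (1 / ξ₂) * ∑ c : G.ConnectedComponent,
        (((Finset.univ.filter (fun v => G.connectedComponentMk v = c)).card : ℝ) /
            (Fintype.card V : ℝ)) *
          (‖g₁ (x (ustar c)) - g₂ (x (ustar c))‖ +
            ((1 / ((Finset.univ.filter (fun v => G.connectedComponentMk v = c)).card : ℝ)) *
              ∑ v ∈ Finset.univ.filter (fun v => G.connectedComponentMk v = c),
                (G.dist v (ustar c) : ℝ)) * ((L₁ : ℝ) + (L₂ : ℝ)) * ξ₁) := by
  set D : V → ℝ := fun v => ‖g₁ (x v) - g₂ (x v)‖ with hD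
  set N : ℝ := (Fintype.card V : ℝ) with hN
  have hN0 : 0 < N := by
    rw [hN]
    exact_mod_cast Fintype.card_pos (α := V)
  set Cc : G.ConnectedComponent → Finset V :=
    fun c => Finset.univ.filter (fun v => G.connectedComponentMk v = c) with hCc
  have hCcard : ∀ c, 0 < ((Cc c).card : ℝ) := by
    intro c
    have : ustar c ∈ Cc c := by simp [hCc, hmem c]
    have := Finset.card_pos.mpr ⟨_, this⟩
    exact_mod_cast this
  -- per-vertex bound
  have key : ∀ (c : G.ConnectedComponent) (v : V), v ∈ Cc c →
      D v ≤ D (ustar c) + (G.dist v (ustar c) : ℝ) * ((L₁:ℝ)+(L₂:ℝ)) * ξ₁ := by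
    intro c v hv
    have hvc : G.connectedComponentMk v = c := by simpa [hCc] using hv
    have hreach : G.Reachable v (ustar c) := by
      rw [← SimpleGraph.ConnectedComponent.eq, hvc, hmem c]
    obtain ⟨w, hw⟩ := hreach.exists_walk_length_eq_dist
    have := walk_bound' G x g₁ g₂ L₁ L₂ h₁ h₂ ξ₁ hedge w
    rw [hw] at this
    exact this
  -- Markov
  have markov : ξ₂ * ((Finset.univ.filter (fun v => ξ₂ ≤ D v)).card : ℝ) ≤ ∑ v, D v := by
    calc ξ₂ * ((Finset.univ.filter (fun v => ξ₂ ≤ D v)).card : ℝ)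
        = ∑ v ∈ Finset.univ.filter (fun v => ξ₂ ≤ D v), ξ₂ := by
          rw [Finset.sum_const, nsmul_eq_mul, mul_comm]
      _ ≤ ∑ v ∈ Finset.univ.filter (fun v => ξ₂ ≤ D v), D v :=
          Finset.sum_le_sum (fun v hv => (Finset.mem_filter.mp hv).2)
      _ ≤ ∑ v, D v :=
          Finset.sum_le_sum_of_subset_of_nonneg (Finset.filter_subset _ _)
            (fun v _ _ => norm_nonneg _)
  have split : ∑ v, D v = ∑ c, ∑ v ∈ Cc c, D v := by
    rw [← Finset.sum_fiberwise Finset.univ (fun v => G.connectedComponentMk v) D]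
  have inner : ∀ c, ∑ v ∈ Cc c, D v ≤
      ((Cc c).card : ℝ) * D (ustar c) +
        (∑ v ∈ Cc c, (G.dist v (ustar c) : ℝ)) * ((L₁:ℝ)+(L₂:ℝ)) * ξ₁ := by
    intro c
    calc ∑ v ∈ Cc c, D v
        ≤ ∑ v ∈ Cc c, (D (ustar c) + (G.dist v (ustar c) : ℝ) * ((L₁:ℝ)+(L₂:ℝ)) * ξ₁) :=
          Finset.sum_le_sum (fun v hv => key c v hv)
      _ = ((Cc c).card : ℝ) * D (ustar c) +
            (∑ v ∈ Cc c, (G.dist v (ustar c) : ℝ)) * ((L₁:ℝ)+(L₂:ℝ)) * ξ₁ := by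
          rw [Finset.sum_add_distrib, Finset.sum_const, nsmul_eq_mul, ← Finset.sum_mul,
            ← Finset.sum_mul]
  -- rewrite RHS
  have rhs_eq : (1 / ξ₂) * ∑ c : G.ConnectedComponent,
        (((Cc c).card : ℝ) / N) * (D (ustar c) +
          ((1 / ((Cc c).card : ℝ)) * ∑ v ∈ Cc c, (G.dist v (ustar c) : ℝ))
            * ((L₁:ℝ)+(L₂:ℝ)) * ξ₁)
      = (1 / (ξ₂ * N)) * ∑ c : G.ConnectedComponent,
        (((Cc c).card : ℝ) * D (ustar c) +
          (∑ v ∈ Cc c, (G.dist v (ustar c) : ℝ)) * ((L₁:ℝ)+(L₂:ℝ)) * ξ₁) := by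
    rw [Finset.mul_sum, Finset.mul_sum]
    refine Finset.sum_congr rfl (fun c _ => ?_)
    have hc := (hCcard c).ne'
    field_simp
  rw [rhs_eq]
  rw [div_le_iff₀ hN0, mul_comm]
  calc N * ((1 / (ξ₂ * N)) * ∑ c : G.ConnectedComponent,
        (((Cc c).card : ℝ) * D (ustar c) +
          (∑ v ∈ Cc c, (G.dist v (ustar c) : ℝ)) * ((L₁:ℝ)+(L₂:ℝ)) * ξ₁))
      = (1 / ξ₂) * ∑ c : G.ConnectedComponent,
        (((Cc c).card : ℝ) * D (ustar c) +
          (∑ v ∈ Cc c, (G.dist v (ustar c) : ℝ)) * ((L₁:ℝ)+(L₂:ℝ)) * ξ₁) := by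
        field_simp
        refine Finset.sum_congr rfl (fun c _ => ?_)
        ring
    _ ≥ (1 / ξ₂) * (ξ₂ * ((Finset.univ.filter (fun v => ξ₂ ≤ D v)).card : ℝ)) := by
        gcongr
        calc ξ₂ * _ ≤ ∑ v, D v := markov
          _ = ∑ c, ∑ v ∈ Cc c, D v := split
          _ ≤ _ := Finset.sum_le_sum (fun c _ => inner c)
    _ = ((Finset.univ.filter (fun v => ξ₂ ≤ D v)).card : ℝ) := by
        field_simp
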